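/- Let K be a field and let s₁, s₂ : V → Dual V be semilinear bijections (each over some automorphism of K) such that for every k-dimensional subspace S and every (n−k)-dimensional subspace U of V, S and U are complementary if and only if (s₂(U))° and (s₁(S))° are complementary. Then (s₁(W))° = (s₂(W))° for every subspace W of V. -/

import Mathlib

open Module

variable (K V : Type*) [DivisionRing K] [AddCommGroup V] [Module K V]

/-- Two subspaces `P`, `T` are adjacent: `dim P = dim T = dim (P ⊓ T) + 1`. -/
def SubAdj (P T : Submodule K V) : Prop :=
  finrank K P = finrank K T ∧ finrank K P = finrank K ↥(P ⊓ T) + 1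

/-- Two subspaces are complementary. -/
def SubCompl (S U : Submodule K V) : Prop := S ⊓ U = ⊥ ∧ S ⊔ U = ⊤

/-- The set 𝒢 of pairs of complementary subspaces of dimensions `k` and `n - k`. -/
def GSet (n k : ℕ) : Set (Submodule K V × Submodule K V) :=
  {p | finrank K p.1 = k ∧ finrank K p.2 = n - k ∧ SubCompl K V p.1 p.2}

/-- Adjacency of pairs. -/
def PairAdj (p q : Submodule K V × Submodule K V) : Prop :=
  (p.1 = q.1 ∧ SubAdj K V p.2 q.2) ∨ (SubAdj K V p.1 q.1 ∧ p.2 = q.2)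

/-- Closeness of pairs. -/
def PairClose (p q : Submodule K V × Submodule K V) : Prop :=
  (p.1 = q.1 ∧ p.2 ≠ q.2) ∨ (p.1 ≠ q.1 ∧ p.2 = q.2)

/-! `δᵢ(W) := (sᵢ(W))°` is an inclusion-reversing bijection of the lattice of subspaces with
`dim δᵢ(W) = n - dim W`, so it maps complementary pairs to complementary pairs. Applied to `δ₂`,
the hypothesis says that a `k`-dimensional subspace `A = δ₂(U)` is a complement of `δ₁(S)` iff it is
a complement of `δ₂(S)`; since an `(n - k)`-dimensional subspace is determined by its
`k`-dimensional complements, `δ₁(S) = δ₂(S)` whenever `dim S = k`. For general `W`, `v ∈ δᵢ(W)` iff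
`W ≤ Hᵢ(v) := {u | sᵢ(u)(v) = 0}`. Now `dim Hᵢ(v) ≥ n - 1 ≥ k`, and such a subspace is determined by
its `k`-dimensional subspaces `S`, for which `S ≤ Hᵢ(v)` iff `v ∈ δᵢ(S)`; hence `H₁(v) = H₂(v)`. -/

open Submodule OrderDual

theorem subCompl_iff_isCompl {K V : Type*} [DivisionRing K] [AddCommGroup V] [Module K V]
    {S U : Submodule K V} : SubCompl K V S U ↔ IsCompl S U := by
  rw [SubCompl, isCompl_iff, disjoint_iff, codisjoint_iff]

section Semilinear

variable {K M N : Type*} [DivisionRing K] [AddCommMonoid M] [Module K M] [AddCommMonoid N] [Module K N]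
  {σ σ' : K →+* K} [RingHomInvPair σ σ'] [RingHomInvPair σ' σ]

theorem LinearEquiv.finrank_eq_of_semilinear (e : M ≃ₛₗ[σ] N) : finrank K M = finrank K N := by
  have h := congrArg Cardinal.toNat (lift_rank_eq_of_equiv_equiv σ e.toAddEquiv
    ⟨σ.injective, RingHomSurjective.is_surjective⟩ e.map_smulₛₗ)
  rwa [Cardinal.toNat_lift, Cardinal.toNat_lift] at h

theorem Submodule.finrank_comap_linearEquiv (e : M ≃ₛₗ[σ] N) (P : Submodule K N) :
    finrank K (P.comap (e : M →ₛₗ[σ] N)) = finrank K P := by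
  rw [comap_equiv_eq_map_symm]
  exact (e.symm.submoduleMap P).finrank_eq_of_semilinear.symm

end Semilinear

section Subspaces

variable {K V : Type*} [DivisionRing K] [AddCommGroup V] [Module K V]

theorem Submodule.finrank_span_singleton_le_one (x : V) : finrank K (K ∙ x) ≤ 1 := by
  simpa using finrank_span_le_card (R := K) {x}

variable [FiniteDimensional K V]

theorem Submodule.exists_le_le_finrank_eq {P Q : Submodule K V} (hPQ : P ≤ Q) {d : ℕ}
    (hP : finrank K P ≤ d) (hQ : d ≤ finrank K Q) :
    ∃ S : Submodule K V, P ≤ S ∧ S ≤ Q ∧ finrank K S = d := by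
  induction d with
  | zero => exact ⟨P, le_rfl, hPQ, by omega⟩
  | succ d ih =>
    rcases hP.eq_or_lt with hP | hP
    · exact ⟨P, le_rfl, hPQ, hP⟩
    obtain ⟨S, hPS, hSQ, hS⟩ := ih (by omega) (by omega)
    obtain ⟨x, hxQ, hxS⟩ := SetLike.exists_of_lt (hSQ.lt_of_ne (by rintro rfl; omega))
    exact ⟨S ⊔ K ∙ x, le_sup_of_le_left hPS, sup_le hSQ ((span_singleton_le_iff_mem x Q).2 hxQ),
      by rw [finrank_sup_span_singleton hxS, hS]⟩

theorem Submodule.le_of_forall_finrank_eq_le_imp {X Y : Submodule K V} {k : ℕ} (hk : 0 < k)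
    (hX : k ≤ finrank K X) (h : ∀ S : Submodule K V, finrank K S = k → S ≤ X → S ≤ Y) :
    X ≤ Y := by
  intro x hx
  obtain ⟨S, hxS, hSX, hS⟩ := exists_le_le_finrank_eq ((span_singleton_le_iff_mem x X).2 hx)
    ((finrank_span_singleton_le_one x).trans hk) hX
  exact h S hS hSX (hxS (mem_span_singleton_self x))

theorem Submodule.eq_of_forall_finrank_eq_le_iff {X Y : Submodule K V} {k : ℕ} (hk : 0 < k)
    (hX : k ≤ finrank K X) (hY : k ≤ finrank K Y)
    (h : ∀ S : Submodule K V, finrank K S = k → (S ≤ X ↔ S ≤ Y)) : X = Y :=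
  le_antisymm (le_of_forall_finrank_eq_le_imp hk hX fun S hS ↦ (h S hS).1)
    (le_of_forall_finrank_eq_le_imp hk hY fun S hS ↦ (h S hS).2)

theorem Submodule.le_of_forall_isCompl_imp {X Y : Submodule K V} {k : ℕ}
    (hY : k + finrank K Y = finrank K V)
    (h : ∀ A : Submodule K V, finrank K A = k → IsCompl A Y → IsCompl A X) : X ≤ Y := by
  intro x hx
  by_contra hxY
  obtain ⟨A, hxA, hAY⟩ := (disjoint_span_singleton_of_notMem hxY).symm.exists_isCompl
  have hA : finrank K A = k := by
    have := finrank_sup_add_finrank_inf_eq A Y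
    rw [hAY.sup_eq_top, hAY.inf_eq_bot, finrank_top, finrank_bot] at this
    omega
  have hx0 : x ≠ 0 := by rintro rfl; exact hxY Y.zero_mem
  exact hx0 ((disjoint_def.1 (h A hA hAY).disjoint) x (hxA (mem_span_singleton_self x)) hx)

theorem Submodule.eq_of_forall_isCompl_iff {X Y : Submodule K V} {k : ℕ}
    (hX : k + finrank K X = finrank K V) (hY : k + finrank K Y = finrank K V)
    (h : ∀ A : Submodule K V, finrank K A = k → (IsCompl A X ↔ IsCompl A Y)) : X = Y :=
  le_antisymm (le_of_forall_isCompl_imp hY fun A hA ↦ (h A hA).2)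
    (le_of_forall_isCompl_imp hX fun A hA ↦ (h A hA).1)

end Subspaces

section Correlation

variable {K V : Type*} [Field K] [AddCommGroup V] [Module K V] [FiniteDimensional K V]
  {σ σ' : K →+* K} [RingHomInvPair σ σ'] [RingHomInvPair σ' σ]

/-- `W ↦ (e(W))°`, as an order isomorphism onto the order dual. -/
noncomputable def correlation (e : V ≃ₛₗ[σ] Dual K V) : Submodule K V ≃o (Submodule K V)ᵒᵈ :=
  (orderIsoMapComap e).trans Subspace.orderIsoFiniteDimensional.symm.dual

variable (e : V ≃ₛₗ[σ] Dual K V)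

theorem mem_correlation {W : Submodule K V} {v : V} :
    v ∈ ofDual (correlation e W) ↔ ∀ w ∈ W, e w v = 0 := by
  change v ∈ (W.map (e : V →ₛₗ[σ] Dual K V)).dualCoannihilator ↔ _
  rw [mem_dualCoannihilator]
  constructor
  · exact fun h w hw ↦ h _ (mem_map_of_mem hw)
  · rintro h _ ⟨w, hw, rfl⟩
    exact h w hw

theorem finrank_correlation_add (W : Submodule K V) :
    finrank K (ofDual (correlation e W) : Submodule K V) + finrank K W = finrank K V := by
  have h := Subspace.finrank_add_finrank_dualCoannihilator_eq (W.map (e : V →ₛₗ[σ] Dual K V))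
  have h' := (e.submoduleMap W).finrank_eq_of_semilinear
  change finrank K (W.map (e : V →ₛₗ[σ] Dual K V)).dualCoannihilator + _ = _
  omega

theorem isCompl_correlation_iff {S U : Submodule K V} :
    IsCompl (ofDual (correlation e S)) (ofDual (correlation e U)) ↔ IsCompl S U :=
  isCompl_ofDual_iff.trans (correlation e).isCompl_iff.symm

theorem coe_correlation (W : Submodule K V) :
    ((ofDual (correlation e W) : Submodule K V) : Set V) = {v : V | ∀ w ∈ W, e w v = 0} :=
  Set.ext fun _ ↦ mem_correlation e

theorem le_comap_dualAnnihilator_iff_le_correlation (S W : Submodule K V) :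
    S ≤ W.dualAnnihilator.comap (e : V →ₛₗ[σ] Dual K V) ↔ W ≤ ofDual (correlation e S) := by
  simp only [SetLike.le_def, mem_comap, mem_dualAnnihilator, mem_correlation]
  exact forall₂_comm

theorem finrank_comap_dualAnnihilator_add (W : Submodule K V) :
    finrank K (W.dualAnnihilator.comap (e : V →ₛₗ[σ] Dual K V)) + finrank K W = finrank K V := by
  rw [finrank_comap_linearEquiv, add_comm]
  exact Subspace.finrank_add_finrank_dualAnnihilator_eq W

end Correlation

section TwoCorrelations

variable {K V : Type*} [Field K] [AddCommGroup V] [Module K V] [FiniteDimensional K V]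
  {σ₁ σ₁' σ₂ σ₂' : K →+* K} [RingHomInvPair σ₁ σ₁'] [RingHomInvPair σ₁' σ₁]
  [RingHomInvPair σ₂ σ₂'] [RingHomInvPair σ₂' σ₂]
  (e₁ : V ≃ₛₗ[σ₁] Dual K V) (e₂ : V ≃ₛₗ[σ₂] Dual K V)

theorem correlation_eq_of_isCompl_iff {k : ℕ}
    (h : ∀ S U : Submodule K V, finrank K S = k → finrank K U + k = finrank K V →
      (IsCompl S U ↔ IsCompl (ofDual (correlation e₂ U)) (ofDual (correlation e₁ S))))
    {S : Submodule K V} (hS : finrank K S = k) : correlation e₁ S = correlation e₂ S := by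
  have hdim₁ := finrank_correlation_add e₁ S
  have hdim₂ := finrank_correlation_add e₂ S
  refine ofDual.injective (eq_of_forall_isCompl_iff (k := k) (by omega) (by omega) fun A hA ↦ ?_)
  obtain ⟨U, rfl⟩ : ∃ U, ofDual (correlation e₂ U) = A :=
    ⟨(correlation e₂).symm (toDual A), by simp⟩
  have hU : finrank K U + k = finrank K V := by
    have := finrank_correlation_add e₂ U
    omega
  rw [← h S U hS hU, isCompl_correlation_iff, isCompl_comm]

theorem correlation_eq_of_forall_finrank_eq {k : ℕ} (hk : 0 < k) (hkV : k < finrank K V)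
    (h : ∀ S : Submodule K V, finrank K S = k → correlation e₁ S = correlation e₂ S)
    (W : Submodule K V) : correlation e₁ W = correlation e₂ W := by
  -- `(K ∙ v).dualAnnihilator.comap e` is `{u | e u v = 0}`
  have hcomap : ∀ v : V, (K ∙ v).dualAnnihilator.comap (e₁ : V →ₛₗ[σ₁] Dual K V) =
      (K ∙ v).dualAnnihilator.comap (e₂ : V →ₛₗ[σ₂] Dual K V) := fun v ↦ by
    have hdim₁ := finrank_comap_dualAnnihilator_add e₁ (K ∙ v)
    have hdim₂ := finrank_comap_dualAnnihilator_add e₂ (K ∙ v)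
    have hline := finrank_span_singleton_le_one (K := K) v
    refine eq_of_forall_finrank_eq_le_iff hk (by omega) (by omega) fun S hS ↦ ?_
    rw [le_comap_dualAnnihilator_iff_le_correlation, le_comap_dualAnnihilator_iff_le_correlation,
      h S hS]
  refine ofDual.injective (SetLike.ext fun v ↦ ?_)
  rw [← span_singleton_le_iff_mem, ← le_comap_dualAnnihilator_iff_le_correlation, hcomap,
    le_comap_dualAnnihilator_iff_le_correlation, span_singleton_le_iff_mem]

end TwoCorrelations

theorem dual_semilinear_pair_compatible_with_compl_agree_general
    {K V : Type*} [Field K] [AddCommGroup V] [Module K V]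
    [FiniteDimensional K V] {n k : ℕ} (hV : finrank K V = n)
    (hk1 : 1 ≤ k) (hk2 : k ≤ n - 1)
    (τ₁ τ₂ : K ≃+* K) (s₁ s₂ : V → Module.Dual K V)
    (hb₁ : Function.Bijective s₁) (hb₂ : Function.Bijective s₂)
    (hadd₁ : ∀ x y : V, s₁ (x + y) = s₁ x + s₁ y)
    (hadd₂ : ∀ x y : V, s₂ (x + y) = s₂ x + s₂ y)
    (hsmul₁ : ∀ (c : K) (v : V), s₁ (c • v) = τ₁ c • s₁ v)
    (hsmul₂ : ∀ (c : K) (v : V), s₂ (c • v) = τ₂ c • s₂ v)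
    (hcompl : ∀ S U A B : Submodule K V,
      finrank K S = k → finrank K U = n - k →
      (A : Set V) = {v : V | ∀ u ∈ U, s₂ u v = 0} →
      (B : Set V) = {v : V | ∀ x ∈ S, s₁ x v = 0} →
      (SubCompl K V S U ↔ SubCompl K V A B)) :
    ∀ W : Submodule K V,
      {v : V | ∀ w ∈ W, s₁ w v = 0} = {v : V | ∀ w ∈ W, s₂ w v = 0} := by
  have := RingHomInvPair.of_ringEquiv τ₁
  have := RingHomInvPair.of_ringEquiv_symm τ₁
  have := RingHomInvPair.of_ringEquiv τ₂
  have := RingHomInvPair.of_ringEquiv_symm τ₂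
  let e₁ : V ≃ₛₗ[(τ₁ : K →+* K)] Dual K V := .ofBijective ⟨⟨s₁, hadd₁⟩, hsmul₁⟩ hb₁
  let e₂ : V ≃ₛₗ[(τ₂ : K →+* K)] Dual K V := .ofBijective ⟨⟨s₂, hadd₂⟩, hsmul₂⟩ hb₂
  have hagree : ∀ S : Submodule K V, finrank K S = k → correlation e₁ S = correlation e₂ S :=
    fun _ ↦ correlation_eq_of_isCompl_iff e₁ e₂ fun S U hS hU ↦ by
      simpa only [subCompl_iff_isCompl] using
        hcompl S U _ _ hS (by omega) (coe_correlation e₂ U) (coe_correlation e₁ S)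
  intro W
  have h := congrArg (fun X ↦ ((ofDual X : Submodule K V) : Set V))
    (correlation_eq_of_forall_finrank_eq e₁ e₂ hk1 (by omega) hagree W)
  rwa [coe_correlation, coe_correlation] at h

/-- If semilinear bijections `s₁, s₂ : V → V*` are such that `S` and `U` are
complementary iff `(s₂(U))°` and `(s₁(S))°` are complementary (for `dim S = k`,
`dim U = n - k`), then `(s₁(W))° = (s₂(W))°` for every subspace `W`. -/
theorem dual_semilinear_pair_compatible_with_compl_agree
    {K V : Type*} [Field K] [AddCommGroup V] [Module K V]
    [FiniteDimensional K V] {n k : ℕ} (hn : 2 ≤ n) (hV : finrank K V = n)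
    (hk1 : 1 ≤ k) (hk2 : k ≤ n - 1)
    (τ₁ τ₂ : K ≃+* K) (s₁ s₂ : V → Module.Dual K V)
    (hb₁ : Function.Bijective s₁) (hb₂ : Function.Bijective s₂)
    (hadd₁ : ∀ x y : V, s₁ (x + y) = s₁ x + s₁ y)
    (hadd₂ : ∀ x y : V, s₂ (x + y) = s₂ x + s₂ y)
    (hsmul₁ : ∀ (c : K) (v : V), s₁ (c • v) = τ₁ c • s₁ v)
    (hsmul₂ : ∀ (c : K) (v : V), s₂ (c • v) = τ₂ c • s₂ v)
    (hcompl : ∀ S U A B : Submodule K V,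
      finrank K S = k → finrank K U = n - k →
      (A : Set V) = {v : V | ∀ u ∈ U, s₂ u v = 0} →
      (B : Set V) = {v : V | ∀ x ∈ S, s₁ x v = 0} →
      (SubCompl K V S U ↔ SubCompl K V A B)) :
    ∀ W : Submodule K V,
      {v : V | ∀ w ∈ W, s₁ w v = 0} = {v : V | ∀ w ∈ W, s₂ w v = 0} :=
  dual_semilinear_pair_compatible_with_compl_agree_general hV hk1 hk2 τ₁ τ₂ s₁ s₂ hb₁ hb₂ hadd₁
    hadd₂ hsmul₁ hsmul₂ hcompl
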